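/- arXiv:1512.08946 — 5 statements merged into one kernel-verified Lean document; each statement's English description precedes it below -/
import Mathlib

section
/- For any full-rank lattice L in R^n with Gaussian mass Θ = Σ_{v∈L} e^{-π‖v‖²} and any x ∈ R^n, one has Σ_{v∈L} e^{-π‖x−v‖²} ≤ Θ, i.e. the Gaussian sum over a translated lattice is maximized at the trivial translate. -/
open scoped Real

open Real Filter Set

/-!
Write `θ(x) = ∑_{v ∈ L} exp(-π‖x - v‖²)`. By the parallelogram law,
`exp(-π‖x - v‖²) exp(-π‖y - w‖²) = exp(-(π/2)‖(x + y) - (v + w)‖²) exp(-(π/2)‖(x - y) - (v - w)‖²)`,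
and `(v, w) ↦ (v + w, v - w)` is a bijection from `L × L` onto the pairs that are congruent
modulo `2L`. Hence `θ(x) θ(y) = ∑_q A_q(x + y) A_q(x - y)`, where `q` runs over `L / 2L` and
`A_q(u)` is the Gaussian sum of width `π/2` over the coset `q`. The pairs `(x, x)`, `(2x, 0)`,
`(0, 0)` and `2ab ≤ a² + b²` give `2θ(x)² ≤ θ(2x)θ(0) + θ(0)²`. Since `θ` is `L`-periodic it is
bounded, and the inequality at points nearly attaining `s = sup θ` gives `2s² ≤ sθ(0) + θ(0)²`,
that is `s ≤ θ(0)`.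
-/

section Doubling

variable {G : Type*} [AddCommGroup G]

abbrev doubles (G : Type*) [AddCommGroup G] : AddSubgroup G :=
  (nsmulAddMonoidHom 2 : G →+ G).range

local notation "Q" => G ⧸ doubles G

lemma mk_add_eq_mk_sub (v w : G) : ((v + w : G) : Q) = ((v - w : G) : Q) :=
  QuotientAddGroup.eq_iff_sub_mem.2 ⟨w, by simp [two_nsmul]⟩

variable [IsAddTorsionFree G]

lemma add_sub_injective : Function.Injective fun p : G × G => (p.1 + p.2, p.1 - p.2) := by
  rintro ⟨v, w⟩ ⟨v', w'⟩ h
  obtain ⟨hsum, hdiff⟩ : v + w = v' + w' ∧ v - w = v' - w' := Prod.mk.inj h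
  have hv : v = v' := nsmul_right_injective two_ne_zero <| by
    simp only [two_nsmul]; linear_combination (norm := abel) hsum + hdiff
  subst hv
  simpa using hsum

noncomputable def addSubEquivSigma :
    G × G ≃ Σ q : Q, {a : G // (a : Q) = q} × {c : G // (c : Q) = q} :=
  Equiv.ofBijective (fun p => ⟨_, ⟨p.1 + p.2, rfl⟩, ⟨p.1 - p.2, (mk_add_eq_mk_sub _ _).symm⟩⟩) <| by
    refine ⟨.of_comp (f := fun t => ((t.2.1 : G), (t.2.2 : G))) add_sub_injective, ?_⟩
    rintro ⟨q, ⟨a, rfl⟩, ⟨c, hc⟩⟩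
    obtain ⟨w, hw⟩ := QuotientAddGroup.eq_iff_sub_mem.1 hc.symm
    refine ⟨(c + w, w), ?_⟩
    obtain rfl : c + w + w = a := by
      rw [add_assoc, ← two_nsmul, ← nsmulAddMonoidHom_apply, hw]; abel
    simp

lemma hasSum_tsum_mul_tsum_fiber {f g : G → ℝ} (hf : Summable f) (hg : Summable g) :
    HasSum (fun q : Q =>
        (∑' a : {a : G // (a : Q) = q}, f a) * ∑' c : {c : G // (c : Q) = q}, g c)
      (∑' p : G × G, f (p.1 + p.2) * g (p.1 - p.2)) := by
  let F : (Σ q : Q, {a : G // (a : Q) = q} × {c : G // (c : Q) = q}) → ℝ :=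
    fun t => f t.2.1 * g t.2.2
  have hmul : Summable fun p : G × G => f p.1 * g p.2 :=
    summable_mul_of_summable_norm hf.norm hg.norm
  have hF : Summable F :=
    addSubEquivSigma.summable_iff.1 (hmul.comp_injective add_sub_injective :)
  have hsum : ∑' p : G × G, f (p.1 + p.2) * g (p.1 - p.2) = ∑' t, F t :=
    addSubEquivSigma.tsum_eq F
  rw [hsum]
  exact hF.hasSum.sigma fun q => (hf.subtype _).hasSum.mul (hg.subtype _).hasSum
    (summable_mul_of_summable_norm (hf.subtype _).norm (hg.subtype _).norm)

end Doubling

lemma apply_le_apply_zero_of_two_mul_sq_le {M : Type*} [AddMonoid M] {θ : M → ℝ}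
    (hbdd : BddAbove (range θ)) (hθ : ∀ x, 0 ≤ θ x)
    (h : ∀ x, 2 * θ x ^ 2 ≤ θ (x + x) * θ 0 + θ 0 ^ 2) (x : M) : θ x ≤ θ 0 := by
  set s := ⨆ y, θ y
  have hle : ∀ y, θ y ≤ s := le_ciSup hbdd
  have hs : 0 ≤ s := (hθ 0).trans (hle 0)
  have hc : 0 ≤ (s * θ 0 + θ 0 ^ 2) / 2 := by have := hθ 0; positivity
  have hsqrt : s ≤ √((s * θ 0 + θ 0 ^ 2) / 2) := ciSup_le fun y =>
    (Real.le_sqrt (hθ y) hc).2 (by nlinarith [h y, hle (y + y), hθ 0])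
  have hs2 := (Real.le_sqrt hs hc).1 hsqrt
  nlinarith [hle x, hθ 0]

instance {E : Type*} [AddCommGroup E] [Module ℝ E] (L : Submodule ℤ E) : IsAddTorsionFree L :=
  have : IsAddTorsionFree E := .of_isTorsionFree ℝ E
  Function.Injective.isAddTorsionFree L.subtype.toAddMonoidHom Subtype.val_injective

section Gaussian

variable {E : Type*} [NormedAddCommGroup E]

lemma exp_neg_mul_norm_sub_sq_le {c : ℝ} (hc : 0 ≤ c) (x v : E) :
    exp (-c * ‖x - v‖ ^ 2) ≤ exp (c * ‖x‖ ^ 2) * exp (-(c / 2) * ‖v‖ ^ 2) := by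
  rw [← exp_add, exp_le_exp]
  have hv : ‖v‖ ≤ ‖x - v‖ + ‖x‖ := by
    simpa [add_comm] using norm_sub_le x (x - v)
  nlinarith [sq_nonneg (‖x - v‖ - ‖x‖), mul_self_le_mul_self (norm_nonneg v) hv]

variable (L : Submodule ℤ E)

noncomputable def gaussianSum (c : ℝ) (x : E) : ℝ := ∑' v : L, exp (-c * ‖x - v‖ ^ 2)

lemma gaussianSum_nonneg (c : ℝ) (x : E) : 0 ≤ gaussianSum L c x :=
  tsum_nonneg fun _ => (exp_pos _).le

lemma gaussianSum_sub_coe (c : ℝ) (x : E) (w : L) :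
    gaussianSum L c (x - w) = gaussianSum L c x := by
  simp only [gaussianSum]
  rw [← (Equiv.subRight w).tsum_eq]
  simp

variable [NormedSpace ℝ E] [FiniteDimensional ℝ E] [DiscreteTopology L]

lemma summable_exp_neg_mul_norm_sub_sq {c : ℝ} (hc : 0 < c) (x : E) :
    Summable fun v : L => exp (-c * ‖x - v‖ ^ 2) := by
  have hr : -(Module.finrank ℤ L + 1 : ℝ) < -Module.finrank ℤ L := by linarith
  refine summable_of_isBigO' (ZLattice.summable_norm_sub_rpow L _ hr x) ?_
  have hL : Tendsto ((↑) : L → E) cofinite (cocompact E) :=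
    L.toAddSubgroup.tendsto_coe_cofinite_of_discrete (isDiscrete_iff_discreteTopology.2 ‹_›)
  have hnorm : Tendsto (fun v : L => ‖(v : E) - x‖) cofinite atTop :=
    tendsto_norm_cocompact_atTop.comp
      ((Homeomorph.subRight x).isClosedEmbedding.tendsto_cocompact.comp hL)
  refine ((rexp_neg_quadratic_isLittleO_rpow_atTop (neg_lt_zero.2 hc) 0 _).comp_tendsto
    hnorm).isBigO.congr_left fun v => ?_
  simp [norm_sub_rev x]

lemma gaussianSum_le {c : ℝ} (hc : 0 < c) (x : E) :
    gaussianSum L c x ≤ exp (c * ‖x‖ ^ 2) * gaussianSum L (c / 2) 0 := by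
  rw [gaussianSum, gaussianSum, ← tsum_mul_left]
  refine (summable_exp_neg_mul_norm_sub_sq L hc x).tsum_le_tsum (fun v => ?_)
    ((summable_exp_neg_mul_norm_sub_sq L (half_pos hc) 0).mul_left _)
  simpa using exp_neg_mul_norm_sub_sq_le hc.le x (v : E)

lemma exists_forall_exists_norm_sub_coe_le [IsZLattice ℝ L] :
    ∃ R, ∀ x : E, ∃ w : L, ‖x - w‖ ≤ R := by
  let b := Module.Free.chooseBasis ℤ L
  let B := b.ofZLatticeBasis ℝ L
  exact ⟨∑ i, ‖B i‖, fun x =>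
    ⟨⟨ZSpan.floor B x, (b.ofZLatticeBasis_span ℝ).le (ZSpan.floor B x).2⟩,
      ZSpan.norm_fract_le B x⟩⟩

lemma gaussianSum_bddAbove [IsZLattice ℝ L] {c : ℝ} (hc : 0 < c) :
    BddAbove (range (gaussianSum L c)) := by
  obtain ⟨R, hR⟩ := exists_forall_exists_norm_sub_coe_le L
  refine ⟨exp (c * R ^ 2) * gaussianSum L (c / 2) 0, ?_⟩
  rintro _ ⟨x, rfl⟩
  obtain ⟨w, hw⟩ := hR x
  rw [← gaussianSum_sub_coe L c x w]
  refine (gaussianSum_le L hc _).trans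
    (mul_le_mul_of_nonneg_right ?_ (gaussianSum_nonneg L _ _))
  gcongr

end Gaussian

section InnerProduct

variable {E : Type*} [NormedAddCommGroup E] [InnerProductSpace ℝ E]

lemma exp_neg_mul_norm_sub_sq_mul (c : ℝ) (x y v w : E) :
    exp (-c * ‖x - v‖ ^ 2) * exp (-c * ‖y - w‖ ^ 2) =
      exp (-(c / 2) * ‖(x + y) - (v + w)‖ ^ 2) * exp (-(c / 2) * ‖(x - y) - (v - w)‖ ^ 2) := by
  rw [← exp_add, ← exp_add, show (x + y) - (v + w) = (x - v) + (y - w) by abel,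
    show (x - y) - (v - w) = (x - v) - (y - w) by abel]
  generalize x - v = p, y - w = q
  rw [norm_add_sq_real, norm_sub_sq_real]
  ring_nf

variable [FiniteDimensional ℝ E] (L : Submodule ℤ E) [DiscreteTopology L]

lemma hasSum_gaussianSum_mul {c : ℝ} (hc : 0 < c) (x y : E) :
    HasSum (fun q : L ⧸ doubles L =>
      (∑' a : {a : L // (a : L ⧸ doubles L) = q}, exp (-(c / 2) * ‖(x + y) - a‖ ^ 2)) *
        ∑' a : {a : L // (a : L ⧸ doubles L) = q}, exp (-(c / 2) * ‖(x - y) - a‖ ^ 2))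
      (gaussianSum L c x * gaussianSum L c y) := by
  have hx := summable_exp_neg_mul_norm_sub_sq L hc x
  have hy := summable_exp_neg_mul_norm_sub_sq L hc y
  convert hasSum_tsum_mul_tsum_fiber (summable_exp_neg_mul_norm_sub_sq L (half_pos hc) (x + y))
    (summable_exp_neg_mul_norm_sub_sq L (half_pos hc) (x - y)) using 1
  rw [gaussianSum, gaussianSum, tsum_mul_tsum_of_summable_norm hx.norm hy.norm]
  refine tsum_congr fun p => ?_
  push_cast
  exact exp_neg_mul_norm_sub_sq_mul c x y p.1 p.2

lemma two_mul_gaussianSum_sq_le {c : ℝ} (hc : 0 < c) (x : E) :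
    2 * gaussianSum L c x ^ 2 ≤
      gaussianSum L c (x + x) * gaussianSum L c 0 + gaussianSum L c 0 ^ 2 := by
  have hxx := hasSum_gaussianSum_mul L hc x x
  have h2x := hasSum_gaussianSum_mul L hc (x + x) 0
  have h00 := hasSum_gaussianSum_mul L hc 0 0
  simp only [sub_self, add_zero, sub_zero] at hxx h2x h00
  rw [sq, sq]
  refine hasSum_le (fun q => ?_) (hxx.mul_left 2) (h2x.add h00)
  rw [← mul_assoc, ← sq, ← sq]
  exact two_mul_le_add_sq _ _

end InnerProduct

theorem gaussian_sum_translate_le_general {n : ℕ}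
    (L : Submodule ℤ (EuclideanSpace ℝ (Fin n)))
    [DiscreteTopology L] [IsZLattice ℝ L]
    (x : EuclideanSpace ℝ (Fin n)) :
    (∑' v : L, Real.exp (-π * ‖x - (v : EuclideanSpace ℝ (Fin n))‖ ^ 2)) ≤
      ∑' v : L, Real.exp (-π * ‖(v : EuclideanSpace ℝ (Fin n))‖ ^ 2) := by
  simpa [gaussianSum] using
    apply_le_apply_zero_of_two_mul_sq_le (gaussianSum_bddAbove L pi_pos)
      (gaussianSum_nonneg L π) (two_mul_gaussianSum_sq_le L pi_pos) x

/-- For any full-rank lattice `L` in `ℝⁿ` with Gaussian mass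
`Θ = Σ_{v ∈ L} e^{-π‖v‖²}` and any `x ∈ ℝⁿ`, the Gaussian sum over the translated lattice
satisfies `Σ_{v ∈ L} e^{-π‖x−v‖²} ≤ Θ`. -/
theorem gaussian_sum_translate_le {n : ℕ}
    (L : Submodule ℤ (EuclideanSpace ℝ (Fin n)))
    [DiscreteTopology L] [IsZLattice ℝ L]
    (x : EuclideanSpace ℝ (Fin n))
    (h₁ : Summable fun v : L => Real.exp (-π * ‖(v : EuclideanSpace ℝ (Fin n))‖ ^ 2))
    (h₂ : Summable fun v : L => Real.exp (-π * ‖x - (v : EuclideanSpace ℝ (Fin n))‖ ^ 2)) :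
    (∑' v : L, Real.exp (-π * ‖x - (v : EuclideanSpace ℝ (Fin n))‖ ^ 2)) ≤
      ∑' v : L, Real.exp (-π * ‖(v : EuclideanSpace ℝ (Fin n))‖ ^ 2) :=
  gaussian_sum_translate_le_general L x
end

section
/- For any full-rank lattice L in R^n and any x ∈ R^n, Σ_{v∈L} e^{-π‖x−v‖²} ≥ 2·covol(L)^{-1} − Σ_{v∈L} e^{-π‖v‖²}. -/
/-!
Let `θ` be the `L`-periodization of `exp (-2π‖y‖²)` and `F` a fundamental domain of `L`,
of volume `covol L`. Unfolding `∫_F` into an integral over the whole space gives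
`∫_F θ (a + y) dy = 2^{-n/2}` and, since
`exp (-2π‖y‖²) exp (-2π‖y + d‖²) = exp (-π‖d‖²) exp (-4π‖y + d/2‖²)`,
`∫_F θ (a + y) θ (b + y) dy = 4^{-n/2} ∑_{v ∈ L} exp (-π‖b - a - v‖²)`.
Cauchy–Schwarz for `θ y + θ (x + y)` on `F` then reads
`4 · 4^{-n/2} ≤ covol L · 4^{-n/2} · 2 (∑_v exp (-π‖v‖²) + ∑_v exp (-π‖x - v‖²))`,
so Poisson summation is not needed.
-/

open scoped Real ENNReal Nat
open MeasureTheory Module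

lemma Real.exp_neg_mul_sq_le_inv_pow {b t : ℝ} (hb : 0 < b) (ht : t ≠ 0) (m : ℕ) :
    Real.exp (-b * t ^ 2) ≤ m ! / b ^ m * t⁻¹ ^ (2 * m) := by
  have hpos : 0 < (b * t ^ 2) ^ m / m ! := by positivity
  calc Real.exp (-b * t ^ 2) = (Real.exp (b * t ^ 2))⁻¹ := by rw [neg_mul, Real.exp_neg]
    _ ≤ ((b * t ^ 2) ^ m / m !)⁻¹ :=
      inv_anti₀ hpos (Real.pow_div_factorial_le_exp _ (by positivity) m)
    _ = m ! / b ^ m * t⁻¹ ^ (2 * m) := by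
      rw [inv_div, mul_pow, ← pow_mul, mul_comm 2 m, inv_pow, div_mul_eq_div_div, div_eq_mul_inv]

lemma ZLattice.summable_exp_neg_mul_norm_sub_sq {E : Type*} [NormedAddCommGroup E]
    [NormedSpace ℝ E] [FiniteDimensional ℝ E] (L : Submodule ℤ E) [DiscreteTopology L]
    {b : ℝ} (hb : 0 < b) (x : E) :
    Summable fun v : L => Real.exp (-b * ‖x - v‖ ^ 2) := by
  set m := finrank ℤ L + 1
  refine .of_norm_bounded_eventually
    ((ZLattice.summable_norm_sub_inv_pow L (2 * m) (by omega) x).mul_left (m ! / b ^ m)) ?_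
  have hfin : {v : L | (v : E) = x}.Finite :=
    Set.Subsingleton.finite fun v hv w hw => Subtype.ext (hv.trans hw.symm)
  filter_upwards [hfin.compl_mem_cofinite] with v hv
  rw [Real.norm_of_nonneg (Real.exp_pos _).le, norm_sub_rev]
  exact Real.exp_neg_mul_sq_le_inv_pow hb (norm_ne_zero_iff.mpr (sub_ne_zero.mpr hv)) m

lemma sq_lintegral_le_measure_univ_mul_lintegral_sq {α : Type*} [MeasurableSpace α]
    (μ : Measure α) {f : α → ℝ≥0∞} (hf : AEMeasurable f μ) :
    (∫⁻ a, f a ∂μ) ^ 2 ≤ μ Set.univ * ∫⁻ a, f a ^ 2 ∂μ := by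
  have h := ENNReal.lintegral_mul_le_Lp_mul_Lq μ .two_two hf (aemeasurable_const (b := 1))
  simp only [Pi.mul_apply, mul_one, lintegral_const, ENNReal.rpow_two, one_pow, one_mul] at h
  calc (∫⁻ a, f a ∂μ) ^ 2
      ≤ ((∫⁻ a, f a ^ 2 ∂μ) ^ (1 / 2 : ℝ) * μ Set.univ ^ (1 / 2 : ℝ)) ^ 2 := by gcongr
    _ = μ Set.univ * ∫⁻ a, f a ^ 2 ∂μ := by
      rw [mul_pow, ← ENNReal.rpow_two, ← ENNReal.rpow_two, ← ENNReal.rpow_mul,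
        ← ENNReal.rpow_mul]
      norm_num [mul_comm]

lemma lintegral_add_sq {α : Type*} [MeasurableSpace α] (μ : Measure α) {f g : α → ℝ≥0∞}
    (hf : Measurable f) (hg : Measurable g) :
    ∫⁻ a, (f a + g a) ^ 2 ∂μ =
      ∫⁻ a, f a * f a ∂μ + 2 * ∫⁻ a, f a * g a ∂μ + ∫⁻ a, g a * g a ∂μ := by
  simp_rw [add_sq, sq, mul_assoc]
  rw [lintegral_add_left, lintegral_add_left, lintegral_const_mul] <;> fun_prop

section Gaussian

variable {V : Type*} [NormedAddCommGroup V]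

noncomputable def ennGaussian (b : ℝ) (v : V) : ℝ≥0∞ :=
  ENNReal.ofReal (Real.exp (-b * ‖v‖ ^ 2))

lemma ennGaussian_ne_top (b : ℝ) (v : V) : ennGaussian b v ≠ ∞ :=
  ENNReal.ofReal_ne_top

@[fun_prop]
lemma measurable_ennGaussian [MeasurableSpace V] [OpensMeasurableSpace V] (b : ℝ) :
    Measurable (ennGaussian (V := V) b) :=
  ENNReal.measurable_ofReal.comp (by fun_prop)

variable [InnerProductSpace ℝ V]

lemma ennGaussian_mul_ennGaussian_add (b : ℝ) (y d : V) :
    ennGaussian b y * ennGaussian b (y + d) =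
      ennGaussian (b / 2) d * ennGaussian (2 * b) (y + (2 : ℝ)⁻¹ • d) := by
  simp only [ennGaussian, ← ENNReal.ofReal_mul (Real.exp_pos _).le, ← Real.exp_add]
  congr 2
  rw [norm_add_sq_real, norm_add_sq_real, inner_smul_right, norm_smul]
  norm_num
  ring

variable [FiniteDimensional ℝ V] [MeasurableSpace V] [BorelSpace V]

lemma lintegral_ennGaussian {b : ℝ} (hb : 0 < b) :
    ∫⁻ v : V, ennGaussian b v = ENNReal.ofReal ((π / b) ^ (finrank ℝ V / 2 : ℝ)) := by
  have h := GaussianFourier.integral_rexp_neg_mul_sq_norm (V := V) hb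
  rw [← h, ofReal_integral_eq_lintegral_ofReal _ (.of_forall fun _ => (Real.exp_pos _).le)]
  · rfl
  exact .of_integral_ne_zero (by rw [h]; positivity)

lemma lintegral_ennGaussian_mul_ennGaussian_add {b : ℝ} (hb : 0 < b) (d : V) :
    ∫⁻ y, ennGaussian b y * ennGaussian b (y + d) =
      ennGaussian (b / 2) d * ENNReal.ofReal ((π / (2 * b)) ^ (finrank ℝ V / 2 : ℝ)) := by
  simp_rw [ennGaussian_mul_ennGaussian_add]
  rw [lintegral_const_mul' _ _ (ennGaussian_ne_top _ _),
    lintegral_add_right_eq_self (fun y => ennGaussian (2 * b) y),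
    lintegral_ennGaussian (by positivity)]

end Gaussian

section Periodize

variable {E : Type*} [NormedAddCommGroup E] (L : Submodule ℤ E)

noncomputable def periodize (f : E → ℝ≥0∞) (y : E) : ℝ≥0∞ :=
  ∑' v : L, f (y - v)

variable {L}

lemma periodize_add_coe (f : E → ℝ≥0∞) (y : E) (v : L) :
    periodize L f (y + v) = periodize L f y := by
  rw [periodize, ← (Equiv.addRight v).tsum_eq]
  simp [periodize]

lemma periodize_add_left (f : E → ℝ≥0∞) (c y : E) :
    periodize L f (c + y) = periodize L (fun z => f (c + z)) y := by
  simp only [periodize, add_sub_assoc]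

variable [MeasurableSpace E] [BorelSpace E] [Countable L]

@[fun_prop]
lemma measurable_periodize {f : E → ℝ≥0∞} (hf : Measurable f) :
    Measurable (periodize L f) :=
  .tsum fun _ => hf.comp (by fun_prop)

lemma setLIntegral_periodize_mul {μ : Measure E} [μ.IsAddLeftInvariant] {F : Set E}
    (hF : IsAddFundamentalDomain L F μ) {f H : E → ℝ≥0∞} (hf : Measurable f)
    (hH : Measurable H) (hper : ∀ (v : L) y, H (y + v) = H y) :
    ∫⁻ y in F, periodize L f y * H y ∂μ = ∫⁻ y, f y * H y ∂μ := by
  have : MeasurableVAdd L E := (inferInstance : MeasurableVAdd L.toAddSubgroup E)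
  have : VAddInvariantMeasure L E μ := (inferInstance : VAddInvariantMeasure L.toAddSubgroup E μ)
  have hshift (v : L) (y : E) : f (↑(-v) + y) * H (↑(-v) + y) = f (y - v) * H y := by
    rw [← hper v, NegMemClass.coe_neg, neg_add_cancel_comm, neg_add_eq_sub]
  simp_rw [hF.lintegral_eq_tsum', Submodule.vadd_def, vadd_eq_add]
  simp_rw [hshift, periodize, ← ENNReal.tsum_mul_right]
  exact lintegral_tsum fun v => ((hf.comp (by fun_prop)).mul hH).aemeasurable

end Periodize

section LatticeGaussian

variable {V : Type*} [NormedAddCommGroup V] [InnerProductSpace ℝ V] [FiniteDimensional ℝ V]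
  [MeasurableSpace V] [BorelSpace V] {L : Submodule ℤ V} [Countable L] {F : Set V}

lemma setLIntegral_periodize_ennGaussian (hF : IsAddFundamentalDomain L F) {b : ℝ} (hb : 0 < b)
    (c : V) :
    ∫⁻ y in F, periodize L (ennGaussian b) (c + y) =
      ENNReal.ofReal ((π / b) ^ (finrank ℝ V / 2 : ℝ)) := by
  have h := setLIntegral_periodize_mul hF (f := fun z => ennGaussian b (c + z)) (H := fun _ => 1)
    (by fun_prop) measurable_const fun _ _ => rfl
  simp only [mul_one] at h
  simp_rw [periodize_add_left _ c, h]
  rw [lintegral_add_left_eq_self, lintegral_ennGaussian hb]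

lemma setLIntegral_periodize_ennGaussian_mul (hF : IsAddFundamentalDomain L F) {b : ℝ}
    (hb : 0 < b) (a c : V) :
    ∫⁻ y in F, periodize L (ennGaussian b) (a + y) * periodize L (ennGaussian b) (c + y) =
      ENNReal.ofReal ((π / (2 * b)) ^ (finrank ℝ V / 2 : ℝ)) *
        periodize L (ennGaussian (b / 2)) (c - a) := by
  have hper (v : L) (y : V) :
      periodize L (ennGaussian b) (c + (y + v)) = periodize L (ennGaussian b) (c + y) := by
    rw [← add_assoc, periodize_add_coe]
  calc ∫⁻ y in F, periodize L (ennGaussian b) (a + y) * periodize L (ennGaussian b) (c + y)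
      = ∫⁻ z, ennGaussian b (a + z) * periodize L (ennGaussian b) (c + z) := by
        simp_rw [periodize_add_left (ennGaussian b) a]
        exact setLIntegral_periodize_mul hF (by fun_prop) (by fun_prop) hper
    _ = ∫⁻ z, ennGaussian b z * periodize L (ennGaussian b) (c - a + z) := by
        rw [← lintegral_add_left_eq_self
          (fun z => ennGaussian b z * periodize L (ennGaussian b) (c - a + z)) a]
        congr with z
        rw [← add_assoc, sub_add_cancel]
    _ = ∑' v : L, ∫⁻ z, ennGaussian b z * ennGaussian b (z + (c - a - v)) := by
        rw [← lintegral_tsum fun v => by fun_prop]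
        congr with z
        rw [periodize, ← ENNReal.tsum_mul_left]
        congr with v
        abel_nf
    _ = _ := by
        simp_rw [lintegral_ennGaussian_mul_ennGaussian_add hb, ENNReal.tsum_mul_right]
        exact mul_comm _ _

end LatticeGaussian

lemma ZLattice.exists_isAddFundamentalDomain_volume_eq {V : Type*} [NormedAddCommGroup V]
    [NormedSpace ℝ V] [FiniteDimensional ℝ V] [MeasurableSpace V] [BorelSpace V]
    (μ : Measure V) [μ.IsAddHaarMeasure] (L : Submodule ℤ V) [DiscreteTopology L]
    [IsZLattice ℝ L] :
    ∃ F : Set V, IsAddFundamentalDomain L F μ ∧ μ F = ENNReal.ofReal (covolume L μ) := by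
  have hF := ZLattice.isAddFundamentalDomain (Free.chooseBasis ℤ L) μ
  refine ⟨_, hF, ?_⟩
  rw [covolume_eq_measure_fundamentalDomain L μ hF, measureReal_def,
    ENNReal.ofReal_toReal (ZSpan.fundamentalDomain_isBounded _).measure_lt_top.ne]

theorem two_le_ofReal_covolume_mul_periodize_ennGaussian_add {V : Type*} [NormedAddCommGroup V]
    [InnerProductSpace ℝ V] [FiniteDimensional ℝ V] [MeasurableSpace V] [BorelSpace V]
    (L : Submodule ℤ V) [DiscreteTopology L] [IsZLattice ℝ L] (x : V) :
    2 ≤ ENNReal.ofReal (ZLattice.covolume L) *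
      (periodize L (ennGaussian π) 0 + periodize L (ennGaussian π) x) := by
  obtain ⟨F, hF, hFvol⟩ := ZLattice.exists_isAddFundamentalDomain_volume_eq volume L
  set θ := periodize L (ennGaussian (2 * π))
  set s := periodize L (ennGaussian π)
  set c := ENNReal.ofReal ((π / (2 * π)) ^ (finrank ℝ V / 2 : ℝ))
  set K := ENNReal.ofReal ((π / (2 * (2 * π))) ^ (finrank ℝ V / 2 : ℝ))
  have hθ (a : V) : Measurable fun y => θ (a + y) := by fun_prop
  have hI (a b : V) : ∫⁻ y in F, θ (a + y) * θ (b + y) = K * s (b - a) := by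
    rw [setLIntegral_periodize_ennGaussian_mul hF (by positivity),
      mul_div_cancel_left₀ _ two_ne_zero]
  have h1 : ∫⁻ y in F, (θ (0 + y) + θ (x + y)) = 2 * c := by
    rw [lintegral_add_left (hθ 0), setLIntegral_periodize_ennGaussian hF (by positivity),
      setLIntegral_periodize_ennGaussian hF (by positivity)]
    exact (two_mul c).symm
  have h2 : ∫⁻ y in F, (θ (0 + y) + θ (x + y)) ^ 2 = K * (2 * (s 0 + s x)) := by
    rw [lintegral_add_sq _ (hθ 0) (hθ x), hI, hI, hI]
    simp only [sub_zero, sub_self]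
    ring
  have hcK : c ^ 2 = K := by
    rw [← ENNReal.ofReal_pow (by positivity), Real.rpow_pow_comm (by positivity)]
    congr 2
    field_simp
  have hK : K ≠ 0 := ENNReal.ofReal_ne_zero_iff.mpr (by positivity)
  have hCS := sq_lintegral_le_measure_univ_mul_lintegral_sq (volume.restrict F)
    (f := fun y => θ (0 + y) + θ (x + y)) ((hθ 0).add (hθ x)).aemeasurable
  rw [Measure.restrict_apply_univ, h1, h2, hFvol, mul_pow, hcK] at hCS
  rw [← ENNReal.mul_le_mul_iff_left (c := 2 * K) (by simpa using hK)
    (ENNReal.mul_ne_top ENNReal.ofNat_ne_top ENNReal.ofReal_ne_top)]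
  convert hCS using 1 <;> ring

lemma periodize_ennGaussian_eq_ofReal_tsum {E : Type*} [NormedAddCommGroup E]
    [NormedSpace ℝ E] [FiniteDimensional ℝ E] (L : Submodule ℤ E) [DiscreteTopology L]
    {b : ℝ} (hb : 0 < b) (x : E) :
    periodize L (ennGaussian b) x = ENNReal.ofReal (∑' v : L, Real.exp (-b * ‖x - v‖ ^ 2)) :=
  (ENNReal.ofReal_tsum_of_nonneg (fun _ => (Real.exp_pos _).le)
    (ZLattice.summable_exp_neg_mul_norm_sub_sq L hb x)).symm

theorem gaussian_sum_translate_ge_general {n : ℕ}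
    (L : Submodule ℤ (EuclideanSpace ℝ (Fin n)))
    [DiscreteTopology L] [IsZLattice ℝ L]
    (x : EuclideanSpace ℝ (Fin n)) :
    2 * (ZLattice.covolume L)⁻¹ -
        ∑' v : L, Real.exp (-π * ‖(v : EuclideanSpace ℝ (Fin n))‖ ^ 2) ≤
      ∑' v : L, Real.exp (-π * ‖x - (v : EuclideanSpace ℝ (Fin n))‖ ^ 2) := by
  have hcov := ZLattice.covolume_pos L volume
  have hs (y : EuclideanSpace ℝ (Fin n)) : 0 ≤ ∑' v : L, Real.exp (-π * ‖y - v‖ ^ 2) :=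
    tsum_nonneg fun _ => (Real.exp_pos _).le
  have key := two_le_ofReal_covolume_mul_periodize_ennGaussian_add L x
  rw [periodize_ennGaussian_eq_ofReal_tsum L Real.pi_pos,
    periodize_ennGaussian_eq_ofReal_tsum L Real.pi_pos, ← ENNReal.ofReal_add (hs 0) (hs x),
    ← ENNReal.ofReal_mul hcov.le, ENNReal.le_ofReal_iff_toReal_le ENNReal.ofNat_ne_top
      (mul_nonneg hcov.le (add_nonneg (hs 0) (hs x)))] at key
  simp only [ENNReal.toReal_ofNat, zero_sub, norm_neg] at key
  rw [sub_le_iff_le_add, ← div_eq_mul_inv, div_le_iff₀ hcov]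
  linarith

/-- For any full-rank lattice `L` in `ℝⁿ` and any `x ∈ ℝⁿ`,
`Σ_{v∈L} e^{-π‖x−v‖²} ≥ 2·covol(L)⁻¹ − Σ_{v∈L} e^{-π‖v‖²}`. -/
theorem gaussian_sum_translate_ge {n : ℕ}
    (L : Submodule ℤ (EuclideanSpace ℝ (Fin n)))
    [DiscreteTopology L] [IsZLattice ℝ L]
    (x : EuclideanSpace ℝ (Fin n))
    (h₁ : Summable fun v : L => Real.exp (-π * ‖(v : EuclideanSpace ℝ (Fin n))‖ ^ 2))
    (h₂ : Summable fun v : L => Real.exp (-π * ‖x - (v : EuclideanSpace ℝ (Fin n))‖ ^ 2)) :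
    2 * (ZLattice.covolume L)⁻¹ -
        ∑' v : L, Real.exp (-π * ‖(v : EuclideanSpace ℝ (Fin n))‖ ^ 2) ≤
      ∑' v : L, Real.exp (-π * ‖x - (v : EuclideanSpace ℝ (Fin n))‖ ^ 2) :=
  gaussian_sum_translate_ge_general L x
end

section
/- For a euclidean lattice E of rank n with theta function θ(t) = Σ_{v∈E} e^{-πt‖v‖²}, the function t ↦ log θ(t) + (n/2) log t is nondecreasing on (0,∞). -/
/-!
Taking logarithms, it suffices that `t ↦ t ^ (n / 2) * θ(t)` is nondecreasing. For `s ≤ t` the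
function `F y = t ^ (n / 2) * exp (-π t ‖y‖²) - s ^ (n / 2) * exp (-π s ‖y‖²)` is the Fourier
transform of `ξ ↦ exp (-π ‖ξ‖² / t) - exp (-π ‖ξ‖² / s) ≥ 0`, so every double sum
`∑ a ∈ S, ∑ b ∈ S, F (a - b)` is nonnegative. Averaging these double sums over larger and larger
coordinate cubes of the lattice (Fejér's argument) shows that `∑ v ∈ L, F v ≥ 0`: in the average,
`F u` carries the proportion of the cube that stays in the cube after translation by `u`, and this
weight tends to `1`.
-/

open scoped Real RealInnerProductSpace Nat
open MeasureTheory Filter Topology Finset Module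

lemma sum_sum_cos_sub {α : Type*} (S : Finset α) (θ : α → ℝ) :
    ∑ a ∈ S, ∑ b ∈ S, Real.cos (θ a - θ b) =
      (∑ a ∈ S, Real.cos (θ a)) ^ 2 + (∑ a ∈ S, Real.sin (θ a)) ^ 2 := by
  simp only [Real.cos_sub, sq, sum_mul_sum, ← sum_add_distrib]

section Fourier

variable {V : Type*} [NormedAddCommGroup V] [InnerProductSpace ℝ V]

section PositiveDefinite

variable [MeasurableSpace V] [OpensMeasurableSpace V] {μ : Measure V} {g : V → ℝ}

lemma MeasureTheory.Integrable.mul_cos_inner (hg : Integrable g μ) (y : V) :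
    Integrable (fun ξ => g ξ * Real.cos (2 * π * ⟪y, ξ⟫)) μ :=
  hg.mul_bdd (by fun_prop) (.of_forall fun _ => Real.abs_cos_le_one _)

lemma sum_sum_integral_mul_cos_sub_nonneg (hg : Integrable g μ) (hg0 : 0 ≤ g) {α : Type*}
    (S : Finset α) (x : α → V) :
    0 ≤ ∑ a ∈ S, ∑ b ∈ S, ∫ ξ, g ξ * Real.cos (2 * π * ⟪x a - x b, ξ⟫) ∂μ := by
  have hint (a b : α) := hg.mul_cos_inner (x a - x b)
  simp_rw [← integral_finsetSum _ fun b _ => hint _ b]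
  rw [← integral_finsetSum _ fun a _ => integrable_finsetSum _ fun b _ => hint a b]
  refine integral_nonneg fun ξ => ?_
  simp_rw [← mul_sum, inner_sub_left, mul_sub, sum_sum_cos_sub]
  exact mul_nonneg (hg0 ξ) (by positivity)

end PositiveDefinite

section Gaussian

variable [FiniteDimensional ℝ V] [MeasurableSpace V] [BorelSpace V]

lemma integrable_exp_neg_mul_sq_norm {b : ℝ} (hb : 0 < b) :
    Integrable (fun ξ : V => Real.exp (-b * ‖ξ‖ ^ 2)) := by
  have h := (GaussianFourier.integrable_cexp_neg_mul_sq_norm_add (V := V)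
    (b := b) (by simpa using hb) 0 0).re
  simpa [← Complex.ofReal_pow, ← Complex.ofReal_mul, ← Complex.ofReal_neg, Complex.exp_ofReal_re]
    using h

lemma integral_exp_neg_mul_sq_norm_mul_cos {a : ℝ} (ha : 0 < a) (y : V) :
    ∫ ξ : V, Real.exp (-(π / a) * ‖ξ‖ ^ 2) * Real.cos (2 * π * ⟪y, ξ⟫) =
      a ^ ((finrank ℝ V : ℝ) / 2) * Real.exp (-π * a * ‖y‖ ^ 2) := by
  have hb : 0 < ((π / a : ℝ) : ℂ).re := by simpa using div_pos Real.pi_pos ha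
  have hre (ξ : V) : Real.exp (-(π / a) * ‖ξ‖ ^ 2) * Real.cos (2 * π * ⟪y, ξ⟫) =
      (Complex.exp (-((π / a : ℝ) : ℂ) * ‖ξ‖ ^ 2 + 2 * π * Complex.I * ⟪y, ξ⟫)).re := by
    rw [show -((π / a : ℝ) : ℂ) * ‖ξ‖ ^ 2 + 2 * π * Complex.I * ⟪y, ξ⟫ =
      ((-(π / a) * ‖ξ‖ ^ 2 : ℝ) : ℂ) + ((2 * π * ⟪y, ξ⟫ : ℝ) : ℂ) * Complex.I by push_cast; ring,
      Complex.exp_add, ← Complex.ofReal_exp, Complex.re_ofReal_mul, Complex.exp_ofReal_mul_I_re]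
  simp_rw [hre]
  have hre_int := integral_re (GaussianFourier.integrable_cexp_neg_mul_sq_norm_add hb
    (2 * π * Complex.I) y)
  simp only [RCLike.re_to_complex] at hre_int
  rw [hre_int, GaussianFourier.integral_cexp_neg_mul_sq_norm_add hb]
  have hscale : (π : ℂ) / ((π / a : ℝ) : ℂ) = a := by
    push_cast; field_simp
  have hexp : (2 * π * Complex.I) ^ 2 * (‖y‖ : ℂ) ^ 2 / (4 * ((π / a : ℝ) : ℂ)) =
      ((-π * a * ‖y‖ ^ 2 : ℝ) : ℂ) := by
    push_cast
    rw [mul_pow, mul_pow, Complex.I_sq]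
    field_simp
    ring
  rw [hscale, hexp, ← Complex.ofReal_natCast, ← Complex.ofReal_ofNat, ← Complex.ofReal_div,
    ← Complex.ofReal_cpow ha.le, ← Complex.ofReal_exp, ← Complex.ofReal_mul, Complex.ofReal_re]

lemma sum_sum_rpow_mul_exp_sub_nonneg {s t : ℝ} (hs : 0 < s) (hst : s ≤ t) {α : Type*}
    (S : Finset α) (x : α → V) :
    0 ≤ ∑ a ∈ S, ∑ b ∈ S, (t ^ ((finrank ℝ V : ℝ) / 2) * Real.exp (-π * t * ‖x a - x b‖ ^ 2) -
      s ^ ((finrank ℝ V : ℝ) / 2) * Real.exp (-π * s * ‖x a - x b‖ ^ 2)) := by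
  have ht := hs.trans_le hst
  have hg := (integrable_exp_neg_mul_sq_norm (V := V) (div_pos Real.pi_pos ht)).sub
    (integrable_exp_neg_mul_sq_norm (div_pos Real.pi_pos hs))
  have hg0 : 0 ≤ fun ξ : V => Real.exp (-(π / t) * ‖ξ‖ ^ 2) - Real.exp (-(π / s) * ‖ξ‖ ^ 2) :=
    fun ξ => sub_nonneg.2 <| Real.exp_le_exp.2 <| mul_le_mul_of_nonneg_right
      (neg_le_neg <| div_le_div_of_nonneg_left Real.pi_pos.le hs hst) (sq_nonneg _)
  have hF (y : V) : t ^ ((finrank ℝ V : ℝ) / 2) * Real.exp (-π * t * ‖y‖ ^ 2) -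
      s ^ ((finrank ℝ V : ℝ) / 2) * Real.exp (-π * s * ‖y‖ ^ 2) =
      ∫ ξ, (Real.exp (-(π / t) * ‖ξ‖ ^ 2) - Real.exp (-(π / s) * ‖ξ‖ ^ 2)) *
        Real.cos (2 * π * ⟪y, ξ⟫) := by
    simp_rw [sub_mul]
    rw [integral_sub ((integrable_exp_neg_mul_sq_norm (div_pos Real.pi_pos ht)).mul_cos_inner y)
      ((integrable_exp_neg_mul_sq_norm (div_pos Real.pi_pos hs)).mul_cos_inner y),
      integral_exp_neg_mul_sq_norm_mul_cos ht, integral_exp_neg_mul_sq_norm_mul_cos hs]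
  simp_rw [hF]
  exact sum_sum_integral_mul_cos_sub_nonneg hg hg0 S x

end Gaussian

end Fourier

lemma sum_sum_sub_eq_tsum_card_mul {Γ : Type*} [AddCommGroup Γ] [DecidableEq Γ] {f : Γ → ℝ}
    (hf : Summable f) (B : Finset Γ) :
    ∑ m ∈ B, ∑ k ∈ B, f (m - k) = ∑' u, (#{m ∈ B | m - u ∈ B} : ℝ) * f u := by
  have hrow (m : Γ) : ∑ k ∈ B, f (m - k) = ∑' u, Set.indicator {u | m - u ∈ B} f u := by
    rw [sum_eq_tsum_indicator, ← (Equiv.subLeft m).tsum_eq]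
    congr 1 with u
    simp [Set.indicator_apply]
  simp_rw [hrow]
  rw [← Summable.tsum_finsetSum fun m _ => hf.indicator _]
  congr 1 with u
  simp [Set.indicator_apply, ← sum_filter]

section IntCube

variable {ι : Type*} [Fintype ι] [DecidableEq ι]

noncomputable def intCube (M : ℕ) : Finset (ι → ℤ) := Fintype.piFinset fun _ => Icc (-(M : ℤ)) M

lemma filter_sub_mem_Icc (M : ℕ) (d : ℤ) :
    {x ∈ Icc (-(M : ℤ)) M | x - d ∈ Icc (-(M : ℤ)) M} = Icc (-(M : ℤ) + max 0 d) (M + min 0 d) := by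
  ext x
  simp only [mem_filter, mem_Icc]
  omega

lemma tendsto_card_filter_sub_mem_Icc_div (d : ℤ) :
    Tendsto (fun M : ℕ => (#{x ∈ Icc (-(M : ℤ)) M | x - d ∈ Icc (-(M : ℤ)) M} : ℝ) / (2 * M + 1))
      atTop (𝓝 1) := by
  have hden : Tendsto (fun M : ℕ => 2 * (M : ℝ) + 1) atTop atTop :=
    tendsto_atTop_add_const_right _ _ (tendsto_natCast_atTop_atTop.const_mul_atTop two_pos)
  have hlim : Tendsto (fun M : ℕ => 1 - |(d : ℝ)| * (2 * (M : ℝ) + 1)⁻¹) atTop (𝓝 1) := by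
    simpa using tendsto_const_nhds.sub (hden.inv_tendsto_atTop.const_mul |(d : ℝ)|)
  refine hlim.congr' ?_
  filter_upwards [eventually_ge_atTop d.natAbs] with M hM
  have hcard : M + min 0 d + 1 - (-(M : ℤ) + max 0 d) = 2 * M + 1 - |d| := by
    rw [abs_eq_max_neg]; omega
  have hnonneg : 0 ≤ 2 * (M : ℤ) + 1 - |d| := by rw [abs_eq_max_neg]; omega
  have hcast : (((2 * M + 1 - |d|).toNat : ℕ) : ℝ) = 2 * M + 1 - |(d : ℝ)| := by
    rw [← Int.cast_abs]; exact_mod_cast Int.toNat_of_nonneg hnonneg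
  rw [filter_sub_mem_Icc, Int.card_Icc, hcard, hcast]
  field_simp

lemma card_filter_sub_mem_intCube (M : ℕ) (u : ι → ℤ) :
    #{m ∈ intCube M | m - u ∈ intCube M} =
      ∏ i, #{x ∈ Icc (-(M : ℤ)) M | x - u i ∈ Icc (-(M : ℤ)) M} := by
  rw [← Fintype.card_piFinset]
  congr 1
  ext m
  simp [intCube, Fintype.mem_piFinset, forall_and]

lemma tendsto_card_filter_sub_mem_intCube_div (u : ι → ℤ) :
    Tendsto (fun M : ℕ =>
      (#{m ∈ intCube M | m - u ∈ intCube M} : ℝ) / #(intCube M : Finset (ι → ℤ)))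
      atTop (𝓝 1) := by
  have h := tendsto_finsetProd univ fun i _ => tendsto_card_filter_sub_mem_Icc_div (u i)
  rw [prod_const_one] at h
  refine h.congr fun M => ?_
  rw [card_filter_sub_mem_intCube, intCube, Fintype.card_piFinset, Nat.cast_prod, Nat.cast_prod,
    ← prod_div_distrib]
  congr! 2 with i
  rw [Int.card_Icc, show ((M : ℤ) + 1 - -M).toNat = 2 * M + 1 by omega]
  norm_cast

theorem tsum_nonneg_of_sum_sum_sub_nonneg_pi {f : (ι → ℤ) → ℝ} (hf : Summable f)
    (hpos : ∀ S : Finset (ι → ℤ), 0 ≤ ∑ m ∈ S, ∑ k ∈ S, f (m - k)) : 0 ≤ ∑' u, f u := by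
  set r : ℕ → (ι → ℤ) → ℝ :=
    fun M u => #{m ∈ intCube M | m - u ∈ intCube M} / #(intCube M : Finset (ι → ℤ))
  have hr_le (M : ℕ) (u : ι → ℤ) : r M u ≤ 1 :=
    div_le_one_of_le₀ (mod_cast card_filter_le _ _) (Nat.cast_nonneg _)
  have hlim : Tendsto (fun M => ∑' u, r M u * f u) atTop (𝓝 (∑' u, f u)) := by
    refine tendsto_tsum_of_dominated_convergence hf.abs
      (fun u => by simpa using (tendsto_card_filter_sub_mem_intCube_div u).mul_const (f u))
      (.of_forall fun M u => ?_)
    rw [norm_mul, Real.norm_eq_abs, abs_of_nonneg (by positivity)]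
    exact mul_le_of_le_one_left (abs_nonneg _) (hr_le M u)
  refine ge_of_tendsto' hlim fun M => ?_
  have hr_sum : ∑' u, r M u * f u =
      (#(intCube M : Finset (ι → ℤ)) : ℝ)⁻¹ * ∑ m ∈ intCube M, ∑ k ∈ intCube M, f (m - k) := by
    rw [sum_sum_sub_eq_tsum_card_mul hf, ← tsum_mul_left]
    congr 1 with u
    ring
  rw [hr_sum]
  exact mul_nonneg (by positivity) (hpos _)

end IntCube

theorem tsum_nonneg_of_sum_sum_sub_nonneg {Γ : Type*} [AddCommGroup Γ] [Module.Free ℤ Γ]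
    [Module.Finite ℤ Γ] {f : Γ → ℝ} (hf : Summable f)
    (hpos : ∀ S : Finset Γ, 0 ≤ ∑ x ∈ S, ∑ y ∈ S, f (x - y)) : 0 ≤ ∑' x, f x := by
  classical
  let e := (Module.Free.chooseBasis ℤ Γ).equivFun.symm.toAddEquiv
  rw [← e.toEquiv.tsum_eq]
  refine tsum_nonneg_of_sum_sum_sub_nonneg_pi (e.toEquiv.summable_iff.2 hf) fun S => ?_
  simpa [sum_map, map_sub] using hpos (S.map e.toEquiv.toEmbedding)

lemma exp_neg_mul_sq_le {c x : ℝ} (hc : 0 < c) (hx : 0 < x) (k : ℕ) :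
    Real.exp (-c * x ^ 2) ≤ k ! / c ^ k * x⁻¹ ^ (2 * k) := by
  have h := Real.pow_div_factorial_le_exp (x := c * x ^ 2) (by positivity) k
  rw [neg_mul, Real.exp_neg, inv_le_comm₀ (Real.exp_pos _) (by positivity)]
  refine (le_of_eq ?_).trans h
  rw [inv_pow]
  field_simp
  ring

section Theta

variable {E : Type*} [NormedAddCommGroup E] [InnerProductSpace ℝ E] [FiniteDimensional ℝ E]
  (L : Submodule ℤ E) [DiscreteTopology L]

noncomputable def latticeTheta (t : ℝ) : ℝ := ∑' v : L, Real.exp (-π * t * ‖(v : E)‖ ^ 2)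

lemma summable_exp_neg_mul_sq_norm_lattice {t : ℝ} (ht : 0 < t) :
    Summable fun v : L => Real.exp (-π * t * ‖(v : E)‖ ^ 2) := by
  set k := finrank ℤ L + 1
  refine .of_norm_bounded_eventually
    ((ZLattice.summable_norm_pow_inv L (2 * k) (by omega)).mul_left (k ! / (π * t) ^ k)) ?_
  filter_upwards [eventually_cofinite_ne 0] with v hv
  rw [Real.norm_of_nonneg (Real.exp_nonneg _), neg_mul π t]
  exact exp_neg_mul_sq_le (by positivity) (norm_pos_iff.2 hv) k

lemma one_le_latticeTheta {t : ℝ} (ht : 0 < t) : 1 ≤ latticeTheta L t := by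
  simpa [latticeTheta] using (summable_exp_neg_mul_sq_norm_lattice L ht).le_tsum 0
    fun v _ => (Real.exp_pos _).le

lemma rpow_mul_latticeTheta_le [MeasurableSpace E] [BorelSpace E] {s t : ℝ} (hs : 0 < s)
    (hst : s ≤ t) :
    s ^ ((finrank ℝ E : ℝ) / 2) * latticeTheta L s ≤
      t ^ ((finrank ℝ E : ℝ) / 2) * latticeTheta L t := by
  have hSs := (summable_exp_neg_mul_sq_norm_lattice L hs).mul_left (s ^ ((finrank ℝ E : ℝ) / 2))
  have hSt := (summable_exp_neg_mul_sq_norm_lattice L (hs.trans_le hst)).mul_left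
    (t ^ ((finrank ℝ E : ℝ) / 2))
  have h := tsum_nonneg_of_sum_sum_sub_nonneg (hSt.sub hSs) fun S => by
    simpa using sum_sum_rpow_mul_exp_sub_nonneg hs hst S ((↑) : L → E)
  rwa [hSt.tsum_sub hSs, tsum_mul_left, tsum_mul_left, sub_nonneg] at h

end Theta

theorem log_theta_add_monotone_general {n : ℕ}
    (L : Submodule ℤ (EuclideanSpace ℝ (Fin n)))
    [DiscreteTopology L] :
    ∀ s t : ℝ, 0 < s → s ≤ t →
      Real.log (∑' v : L, Real.exp (-π * s * ‖(v : EuclideanSpace ℝ (Fin n))‖ ^ 2)) +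
          ((n : ℝ) / 2) * Real.log s ≤
        Real.log (∑' v : L, Real.exp (-π * t * ‖(v : EuclideanSpace ℝ (Fin n))‖ ^ 2)) +
          ((n : ℝ) / 2) * Real.log t := by
  intro s t hs hst
  have ht := hs.trans_le hst
  have hθs := one_le_latticeTheta L hs
  have hθt := one_le_latticeTheta L ht
  have h := Real.log_le_log (by positivity) (rpow_mul_latticeTheta_le L hs hst)
  rw [Real.log_mul (by positivity) (by positivity), Real.log_mul (by positivity) (by positivity),
    Real.log_rpow hs, Real.log_rpow ht, finrank_euclideanSpace_fin] at h
  rw [latticeTheta, latticeTheta] at h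
  linarith

/-- For a euclidean lattice `E` of rank `n` with theta function
`θ(t) = Σ_{v∈E} e^{-πt‖v‖²}`, the function `t ↦ log θ(t) + (n/2) log t` is nondecreasing on
`(0,∞)`. -/
theorem log_theta_add_monotone {n : ℕ}
    (L : Submodule ℤ (EuclideanSpace ℝ (Fin n)))
    [DiscreteTopology L] [IsZLattice ℝ L] :
    ∀ s t : ℝ, 0 < s → s ≤ t →
      Real.log (∑' v : L, Real.exp (-π * s * ‖(v : EuclideanSpace ℝ (Fin n))‖ ^ 2)) +
          ((n : ℝ) / 2) * Real.log s ≤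
        Real.log (∑' v : L, Real.exp (-π * t * ‖(v : EuclideanSpace ℝ (Fin n))‖ ^ 2)) +
          ((n : ℝ) / 2) * Real.log t :=
  log_theta_add_monotone_general L
end

section
/- If E is a euclidean lattice of positive rank n with first minimum λ₁(E) ≥ 1, then h⁰_θ(E) ≤ −log(1 − 1/(2π)) + (n/2) log n. -/
/-!
Balls of radius `1/2` around the points of `L` are disjoint, so comparing volumes shows that
at most `(k + 4)^n` lattice vectors have norm in `[1 + k/2, 1 + (k+1)/2]`. Hence
`θ(L) ≤ 1 + ∑ₖ (k + 4)^n e^{-π(1 + k/2)²}`. For `n ≤ 2` this series is dominated by a geometric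
series of ratio `(5/4)^n e^{-π}`. For `n ≥ 3` the inequality `t^n ≤ n^{n/2} e^{t²/(2e)}`, a form of
`log x ≤ x / e`, bounds it by `n^{n/2} e^{8/e - π} / (1 - e^{-2})`. Numerical bounds on `e^{-π}`,
`e^{8/e - π}` and `e^{-2}` then give `θ(L) ≤ (1 - 1/(2π))⁻¹ n^{n/2}`.
-/

open scoped Real ENNReal
open Real Metric MeasureTheory Module Finset

theorem card_le_of_one_le_dist {E : Type*} [NormedAddCommGroup E] [NormedSpace ℝ E]
    [FiniteDimensional ℝ E] {t : Finset E} {R : ℝ} (hR : 0 ≤ R) (ht : ∀ x ∈ t, ‖x‖ ≤ R)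
    (hsep : (t : Set E).Pairwise fun x y => 1 ≤ dist x y) :
    (#t : ℝ) ≤ (2 * R + 1) ^ finrank ℝ E := by
  borelize E
  let μ : Measure E := Measure.addHaar
  have hdisj : (t : Set E).PairwiseDisjoint fun x => ball x (1 / 2) := fun x hx y hy hxy =>
    ball_disjoint_ball (by linarith [hsep hx hy hxy])
  have hsub : ⋃ x ∈ t, ball x (1 / 2) ⊆ ball (0 : E) (R + 1 / 2) :=
    Set.iUnion₂_subset fun x hx => ball_subset_ball' (by rw [dist_zero_right]; linarith [ht x hx])
  have hvol : (#t : ℝ≥0∞) * ENNReal.ofReal ((1 / 2) ^ finrank ℝ E) * μ (ball 0 1) ≤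
      ENNReal.ofReal ((R + 1 / 2) ^ finrank ℝ E) * μ (ball 0 1) :=
    calc (#t : ℝ≥0∞) * ENNReal.ofReal ((1 / 2) ^ finrank ℝ E) * μ (ball 0 1)
        = μ (⋃ x ∈ t, ball x (1 / 2)) := by
          rw [measure_biUnion_finset hdisj fun _ _ => measurableSet_ball]
          simp only [μ.addHaar_ball_of_pos _ one_half_pos, sum_const, nsmul_eq_mul, mul_assoc]
      _ ≤ μ (ball 0 (R + 1 / 2)) := measure_mono hsub
      _ = _ := μ.addHaar_ball_of_pos _ (by positivity)
  have hreal : (#t : ℝ) * (1 / 2) ^ finrank ℝ E ≤ (R + 1 / 2) ^ finrank ℝ E := by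
    have := ENNReal.toReal_le_of_le_ofReal (by positivity)
      ((ENNReal.mul_le_mul_iff_left (measure_ball_pos μ _ one_pos).ne'
        measure_ball_lt_top.ne).1 hvol)
    rwa [ENNReal.toReal_mul, ENNReal.toReal_ofReal (by positivity), ENNReal.toReal_natCast] at this
  calc (#t : ℝ) = #t * (1 / 2) ^ finrank ℝ E * 2 ^ finrank ℝ E := by
        rw [mul_assoc, ← mul_pow]; norm_num
    _ ≤ (R + 1 / 2) ^ finrank ℝ E * 2 ^ finrank ℝ E := by gcongr
    _ = (2 * R + 1) ^ finrank ℝ E := by rw [← mul_pow]; ring_nf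

theorem le_exp_div_exp_one (u : ℝ) : u ≤ exp (u / exp 1) := by
  have := add_one_le_exp (u / exp 1 - 1)
  rwa [sub_add_cancel, exp_sub, div_le_div_iff_of_pos_right (exp_pos 1)] at this

theorem le_exp_sq_div_two_mul_exp_one (s : ℝ) : s ≤ exp (s ^ 2 / (2 * exp 1)) := by
  refine (abs_le_of_sq_le_sq' ?_ (exp_pos _).le).2
  have h : ((2 : ℕ) : ℝ) * (s ^ 2 / (2 * exp 1)) = s ^ 2 / exp 1 := by
    push_cast
    field_simp
  rw [← exp_nat_mul, h]
  exact le_exp_div_exp_one _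

theorem pow_le_sqrt_pow_mul_exp (n : ℕ) {t : ℝ} (ht : 0 ≤ t) :
    t ^ n ≤ √n ^ n * exp (t ^ 2 / (2 * exp 1)) := by
  rcases n.eq_zero_or_pos with rfl | hn
  · simp [one_le_exp (by positivity : 0 ≤ t ^ 2 / (2 * exp 1))]
  have hsqrt : 0 < √(n : ℝ) := by positivity
  calc t ^ n = √n ^ n * (t / √n) ^ n := by
        rw [div_pow, mul_div_cancel₀ _ (pow_pos hsqrt n).ne']
    _ ≤ √n ^ n * exp ((t / √n) ^ 2 / (2 * exp 1)) ^ n := by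
        gcongr
        exact le_exp_sq_div_two_mul_exp_one _
    _ = √n ^ n * exp (t ^ 2 / (2 * exp 1)) := by
        rw [← exp_nat_mul, div_pow, sq_sqrt (Nat.cast_nonneg n)]
        field_simp

theorem tsum_le_of_le_geometric {f : ℕ → ℝ} {c r : ℝ} (hf : Summable f) (hr₀ : 0 ≤ r)
    (hr₁ : r < 1) (h : ∀ k, f k ≤ c * r ^ k) : ∑' k, f k ≤ c * (1 - r)⁻¹ := by
  rw [← tsum_geometric_of_lt_one hr₀ hr₁, ← tsum_mul_left]
  exact hf.tsum_le_tsum h ((summable_geometric_of_lt_one hr₀ hr₁).mul_left c)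

theorem exp_neg_le_inv_one_add {x : ℝ} (hx : -1 < x) : exp (-x) ≤ (1 + x)⁻¹ := by
  rw [exp_neg]
  exact inv_anti₀ (by linarith) (by linarith [add_one_le_exp x])

theorem pow_le_exp_natCast (k : ℕ) : (2.7182818283 : ℝ) ^ k ≤ exp k := by
  rw [← exp_one_pow]
  gcongr
  exact exp_one_gt_d9.le

theorem exp_neg_pi_le : exp (-π) ≤ 0.0437 := by
  have hπ : exp π = exp (3 : ℕ) * exp (π - 3) := by rw [← exp_add]; norm_num
  have hrest : 1.14159 ≤ exp (π - 3) := by linarith [add_one_le_exp (π - 3), pi_gt_d6]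
  rw [exp_neg]
  refine inv_le_of_inv_le₀ (by norm_num) ?_
  calc (0.0437 : ℝ)⁻¹ ≤ 2.7182818283 ^ 3 * 1.14159 := by norm_num
    _ ≤ exp π := by rw [hπ]; gcongr; exact pow_le_exp_natCast 3

theorem exp_neg_two_le : exp (-2) ≤ 0.136 := by
  rw [exp_neg]
  refine inv_le_of_inv_le₀ (by norm_num) ?_
  calc (0.136 : ℝ)⁻¹ ≤ 2.7182818283 ^ 2 := by norm_num
    _ ≤ exp (2 : ℕ) := pow_le_exp_natCast 2
    _ = exp 2 := by norm_num

theorem exp_eight_div_exp_one_sub_pi_le : exp (8 / exp 1 - π) ≤ 0.835 := by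
  have h8 : 8 / exp 1 ≤ 2.94318 := by
    rw [div_le_iff₀ (exp_pos 1)]; linarith [exp_one_gt_d9]
  calc exp (8 / exp 1 - π) ≤ exp (-0.1984) := by
        gcongr; linarith [pi_gt_d6]
    _ ≤ (1 + 0.1984)⁻¹ := exp_neg_le_inv_one_add (by norm_num)
    _ ≤ 0.835 := by norm_num

theorem inv_one_sub_inv_two_pi_ge : 1.188 ≤ (1 - 1 / (2 * π))⁻¹ := by
  have h : 1 / 6.3 < 1 / (2 * π) := by gcongr; linarith [pi_lt_d2]
  have h' : 1 / (2 * π) < 1 / 6 := by gcongr; linarith [pi_gt_d2]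
  refine le_inv_of_le_inv₀ (by linarith) ?_
  norm_num at h ⊢
  linarith

/-- Bound for the part of the theta series coming from the shell
`1 + k/2 ≤ ‖v‖ ≤ 1 + (k+1)/2`: at most `(k + 4)^n` vectors, each contributing at most
`exp (-π (1 + k/2)²)`. -/
noncomputable def shellTerm (n k : ℕ) : ℝ := ((k : ℝ) + 4) ^ n * exp (-π * (1 + k / 2) ^ 2)

theorem shellTerm_nonneg (n k : ℕ) : 0 ≤ shellTerm n k := by
  unfold shellTerm
  positivity

theorem shellTerm_le_four_pow_mul_geometric (n k : ℕ) :
    shellTerm n k ≤ 4 ^ n * exp (-π) * ((5 / 4) ^ n * exp (-π)) ^ k := by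
  have hpow : ((k : ℝ) + 4) ^ n ≤ 4 ^ n * ((5 / 4) ^ n) ^ k := by
    have := one_add_mul_le_pow (show (-2 : ℝ) ≤ 1 / 4 by norm_num) k
    rw [← pow_mul, mul_comm n, pow_mul, ← mul_pow]
    gcongr
    linarith
  have hexp : exp (-π * (1 + k / 2) ^ 2) ≤ exp (-π) * exp (-π) ^ k := by
    rw [← exp_nat_mul, ← exp_add, exp_le_exp]
    nlinarith [pi_pos, sq_nonneg (k : ℝ)]
  calc shellTerm n k ≤ (4 ^ n * ((5 / 4) ^ n) ^ k) * (exp (-π) * exp (-π) ^ k) := by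
        unfold shellTerm; gcongr
    _ = _ := by ring

theorem shellTerm_le_sqrt_pow_mul_geometric (n k : ℕ) :
    shellTerm n k ≤ √n ^ n * exp (8 / exp 1 - π) * exp (-2) ^ k := by
  have hexponent : ((k : ℝ) + 4) ^ 2 / (2 * exp 1) - π * (1 + k / 2) ^ 2 ≤
      8 / exp 1 - π + k * (-2) := by
    have he : 1 / exp 1 ≤ 0.371 := by
      rw [div_le_iff₀ (exp_pos 1)]; linarith [exp_one_gt_d9]
    have hk : (k : ℝ) ≤ k ^ 2 := by
      rcases k.eq_zero_or_pos with rfl | hk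
      · simp
      · nlinarith [(Nat.one_le_cast (α := ℝ)).2 hk]
    have hpi := pi_gt_d2
    have hk0 := (Nat.cast_nonneg k : (0 : ℝ) ≤ k)
    have hsplit : ((k : ℝ) + 4) ^ 2 / (2 * exp 1) - 8 / exp 1 =
        (k ^ 2 + 8 * k) / 2 * (1 / exp 1) := by
      field_simp; ring
    nlinarith [mul_le_mul_of_nonneg_left he (by positivity : (0 : ℝ) ≤ (k ^ 2 + 8 * k) / 2)]
  calc shellTerm n k
      ≤ (√n ^ n * exp (((k : ℝ) + 4) ^ 2 / (2 * exp 1))) * exp (-π * (1 + k / 2) ^ 2) := by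
        unfold shellTerm
        gcongr
        exact pow_le_sqrt_pow_mul_exp n (by positivity)
    _ = √n ^ n * exp (((k : ℝ) + 4) ^ 2 / (2 * exp 1) - π * (1 + k / 2) ^ 2) := by
        rw [mul_assoc, ← exp_add]; ring_nf
    _ ≤ √n ^ n * exp (8 / exp 1 - π + k * (-2)) := by gcongr
    _ = _ := by rw [exp_add, exp_nat_mul, mul_assoc]

theorem summable_shellTerm (n : ℕ) : Summable (shellTerm n) :=
  .of_nonneg_of_le (shellTerm_nonneg n) (shellTerm_le_sqrt_pow_mul_geometric n)
    ((summable_geometric_of_lt_one (exp_pos _).le (exp_lt_one_iff.2 (by norm_num))).mul_left _)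

theorem one_add_tsum_shellTerm_le_of_le_two {n : ℕ} (hn : n ≤ 2) :
    1 + ∑' k, shellTerm n k ≤ (1 - 1 / (2 * π))⁻¹ * √n ^ n := by
  have hx := exp_neg_pi_le
  have hr : (5 / 4 : ℝ) ^ n ≤ 25 / 16 := by
    calc (5 / 4 : ℝ) ^ n ≤ (5 / 4) ^ 2 := pow_le_pow_right₀ (by norm_num) hn
      _ = 25 / 16 := by norm_num
  have hr₁ : 0 < 1 - (5 / 4) ^ n * exp (-π) := by nlinarith [exp_pos (-π)]
  have htsum : ∑' k, shellTerm n k ≤ 4 ^ n * 0.0437 * (1 - (5 / 4) ^ n * 0.0437)⁻¹ :=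
    calc ∑' k, shellTerm n k ≤ 4 ^ n * exp (-π) * (1 - (5 / 4) ^ n * exp (-π))⁻¹ :=
          tsum_le_of_le_geometric (summable_shellTerm n) (by positivity) (by linarith)
            (shellTerm_le_four_pow_mul_geometric n)
      _ ≤ 4 ^ n * 0.0437 * (1 - (5 / 4) ^ n * 0.0437)⁻¹ := by
          gcongr
          nlinarith
  calc 1 + ∑' k, shellTerm n k ≤ 1 + 4 ^ n * 0.0437 * (1 - (5 / 4) ^ n * 0.0437)⁻¹ := by
        linarith
    _ ≤ 1.188 * √n ^ n := by interval_cases n <;> norm_num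
    _ ≤ (1 - 1 / (2 * π))⁻¹ * √n ^ n := by gcongr; exact inv_one_sub_inv_two_pi_ge

theorem one_add_tsum_shellTerm_le_of_three_le {n : ℕ} (hn : 3 ≤ n) :
    1 + ∑' k, shellTerm n k ≤ (1 - 1 / (2 * π))⁻¹ * √n ^ n := by
  have hN : 5 ≤ √n ^ n := by
    have h3 : (1.73 : ℝ) ≤ √n := by
      rw [le_sqrt (by norm_num) (by positivity)]
      have : (3 : ℝ) ≤ n := by exact_mod_cast hn
      norm_num
      linarith
    calc (5 : ℝ) ≤ 1.73 ^ 3 := by norm_num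
      _ ≤ √n ^ 3 := by gcongr
      _ ≤ √n ^ n := pow_le_pow_right₀ (by linarith) hn
  have hgeom : exp (8 / exp 1 - π) * (1 - exp (-2))⁻¹ ≤ 0.967 :=
    calc exp (8 / exp 1 - π) * (1 - exp (-2))⁻¹ ≤ 0.835 * (1 - 0.136)⁻¹ := by
          gcongr ?_ * (1 - ?_)⁻¹
          · exact inv_nonneg.2 (by linarith [exp_neg_two_le])
          · exact exp_eight_div_exp_one_sub_pi_le
          · exact exp_neg_two_le
      _ ≤ 0.967 := by norm_num
  have htsum : ∑' k, shellTerm n k ≤ √n ^ n * 0.967 :=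
    calc ∑' k, shellTerm n k ≤ √n ^ n * exp (8 / exp 1 - π) * (1 - exp (-2))⁻¹ :=
          tsum_le_of_le_geometric (summable_shellTerm n) (exp_pos _).le
            (exp_lt_one_iff.2 (by norm_num)) (shellTerm_le_sqrt_pow_mul_geometric n)
      _ ≤ √n ^ n * 0.967 := by rw [mul_assoc]; gcongr
  nlinarith [inv_one_sub_inv_two_pi_ge]

theorem one_add_tsum_shellTerm_le (n : ℕ) :
    1 + ∑' k, shellTerm n k ≤ (1 - 1 / (2 * π))⁻¹ * √n ^ n := by
  rcases le_or_gt n 2 with hn | hn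
  · exact one_add_tsum_shellTerm_le_of_le_two hn
  · exact one_add_tsum_shellTerm_le_of_three_le hn

section Lattice

variable {E : Type*} [NormedAddCommGroup E] [NormedSpace ℝ E] [FiniteDimensional ℝ E]
  {L : Submodule ℤ E}

theorem card_le_of_first_minimum_ge_one (hL : ∀ v ∈ L, v ≠ 0 → 1 ≤ ‖v‖) {s : Finset L} {R : ℝ}
    (hR : 0 ≤ R) (hs : ∀ v ∈ s, ‖(v : E)‖ ≤ R) : (#s : ℝ) ≤ (2 * R + 1) ^ finrank ℝ E := by
  rw [← card_map (Function.Embedding.subtype _)]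
  refine card_le_of_one_le_dist hR (by simpa using hs) ?_
  simp only [coe_map, Function.Embedding.coe_subtype]
  rintro _ ⟨v, -, rfl⟩ _ ⟨w, -, rfl⟩ hvw
  rw [dist_eq_norm]
  exact hL _ (L.sub_mem v.2 w.2) (sub_ne_zero.2 hvw)

theorem sum_exp_neg_pi_norm_sq_le_shellTerm (hL : ∀ v ∈ L, v ≠ 0 → 1 ≤ ‖v‖) (k : ℕ)
    {s : Finset L} (hs : ∀ v ∈ s, 1 + k / 2 ≤ ‖(v : E)‖ ∧ ‖(v : E)‖ ≤ 1 + (k + 1) / 2) :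
    ∑ v ∈ s, exp (-π * ‖(v : E)‖ ^ 2) ≤ shellTerm (finrank ℝ E) k := by
  have hcard : (#s : ℝ) ≤ ((k : ℝ) + 4) ^ finrank ℝ E := by
    convert card_le_of_first_minimum_ge_one hL (by positivity) fun v hv => (hs v hv).2 using 2
    ring
  calc ∑ v ∈ s, exp (-π * ‖(v : E)‖ ^ 2) ≤ ∑ _v ∈ s, exp (-π * (1 + k / 2) ^ 2) := by
        refine sum_le_sum fun v hv => exp_le_exp.2 ?_
        have := pow_le_pow_left₀ (by positivity) (hs v hv).1 2
        nlinarith [pi_pos]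
    _ = #s * exp (-π * (1 + k / 2) ^ 2) := by rw [sum_const, nsmul_eq_mul]
    _ ≤ shellTerm (finrank ℝ E) k := by unfold shellTerm; gcongr

theorem sum_exp_neg_pi_norm_sq_le (hL : ∀ v ∈ L, v ≠ 0 → 1 ≤ ‖v‖) (s : Finset L) :
    ∑ v ∈ s, exp (-π * ‖(v : E)‖ ^ 2) ≤ 1 + ∑' k, shellTerm (finrank ℝ E) k := by
  classical
  set f : L → ℝ := fun v => exp (-π * ‖(v : E)‖ ^ 2)
  set shell : L → ℕ := fun v => ⌊2 * (‖(v : E)‖ - 1)⌋₊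
  have hshell : ∀ v ∈ s.erase 0,
      1 + shell v / 2 ≤ ‖(v : E)‖ ∧ ‖(v : E)‖ ≤ 1 + (shell v + 1) / 2 := by
    intro v hv
    have h1 : 1 ≤ ‖(v : E)‖ := hL v v.2 (by simpa using ne_of_mem_erase hv)
    have hlo := Nat.floor_le (by linarith : 0 ≤ 2 * (‖(v : E)‖ - 1))
    have hhi := Nat.lt_floor_add_one (2 * (‖(v : E)‖ - 1))
    constructor <;> linarith
  calc ∑ v ∈ s, f v ≤ ∑ v ∈ insert 0 s, f v :=
        sum_le_sum_of_subset_of_nonneg (subset_insert 0 s) fun _ _ _ => (exp_pos _).le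
    _ = 1 + ∑ v ∈ s.erase 0, f v := by
        rw [← add_sum_erase _ _ (mem_insert_self 0 s), erase_insert_eq_erase]; simp [f]
    _ = 1 + ∑ k ∈ (s.erase 0).image shell, ∑ v ∈ s.erase 0 with shell v = k, f v := by
        rw [sum_fiberwise_of_maps_to fun v hv => mem_image_of_mem shell hv]
    _ ≤ 1 + ∑ k ∈ (s.erase 0).image shell, shellTerm (finrank ℝ E) k := by
        gcongr with k
        refine sum_exp_neg_pi_norm_sq_le_shellTerm hL k fun v hv => ?_
        obtain ⟨hv', rfl⟩ := mem_filter.1 hv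
        exact hshell v hv'
    _ ≤ 1 + ∑' k, shellTerm (finrank ℝ E) k := by
        gcongr
        exact (summable_shellTerm _).sum_le_tsum _ fun k _ => shellTerm_nonneg _ k

theorem summable_exp_neg_pi_norm_sq (hL : ∀ v ∈ L, v ≠ 0 → 1 ≤ ‖v‖) :
    Summable fun v : L => exp (-π * ‖(v : E)‖ ^ 2) :=
  summable_of_sum_le (fun _ => (exp_pos _).le) (sum_exp_neg_pi_norm_sq_le hL)

theorem tsum_exp_neg_pi_norm_sq_le (hL : ∀ v ∈ L, v ≠ 0 → 1 ≤ ‖v‖) :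
    ∑' v : L, exp (-π * ‖(v : E)‖ ^ 2) ≤ 1 + ∑' k, shellTerm (finrank ℝ E) k :=
  Real.tsum_le_of_sum_le (fun _ => (exp_pos _).le) (sum_exp_neg_pi_norm_sq_le hL)

end Lattice

theorem h0theta_le_of_first_minimum_ge_one_general {n : ℕ}
    (L : Submodule ℤ (EuclideanSpace ℝ (Fin n)))
    (hlam : ∀ v ∈ L, v ≠ 0 → 1 ≤ ‖v‖) :
    Real.log (∑' v : L, Real.exp (-π * ‖(v : EuclideanSpace ℝ (Fin n))‖ ^ 2)) ≤
      -Real.log (1 - 1 / (2 * π)) + ((n : ℝ) / 2) * Real.log n := by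
  have hθ_pos : 0 < ∑' v : L, exp (-π * ‖(v : EuclideanSpace ℝ (Fin n))‖ ^ 2) :=
    (summable_exp_neg_pi_norm_sq hlam).tsum_pos (fun _ => (exp_pos _).le) 0 (exp_pos _)
  have hθ := (tsum_exp_neg_pi_norm_sq_le hlam).trans (one_add_tsum_shellTerm_le _)
  rw [finrank_euclideanSpace_fin] at hθ
  have hC : 0 < (1 - 1 / (2 * π))⁻¹ := lt_of_lt_of_le (by norm_num) inv_one_sub_inv_two_pi_ge
  have hN : 0 < √n ^ n := pos_of_mul_pos_right (hθ_pos.trans_le hθ) hC.le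
  calc _ ≤ log ((1 - 1 / (2 * π))⁻¹ * √n ^ n) := log_le_log hθ_pos hθ
    _ = _ := by
      rw [log_mul hC.ne' hN.ne', log_inv, log_pow, log_sqrt (Nat.cast_nonneg n)]
      ring

/-- If `E` is a euclidean lattice of positive rank `n` with first minimum
`λ₁(E) ≥ 1` (i.e. every nonzero lattice vector has norm `≥ 1`), then
`h⁰_θ(E) ≤ −log(1 − 1/(2π)) + (n/2) log n`. -/
theorem h0theta_le_of_first_minimum_ge_one {n : ℕ} (hn : 0 < n)
    (L : Submodule ℤ (EuclideanSpace ℝ (Fin n)))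
    [DiscreteTopology L] [IsZLattice ℝ L]
    (hlam : ∀ v ∈ L, v ≠ 0 → 1 ≤ ‖v‖) :
    Real.log (∑' v : L, Real.exp (-π * ‖(v : EuclideanSpace ℝ (Fin n))‖ ^ 2)) ≤
      -Real.log (1 - 1 / (2 * π)) + ((n : ℝ) / 2) * Real.log n :=
  h0theta_le_of_first_minimum_ge_one_general L hlam
end

section
/- Let D be a countable set and (μ_i)_{i∈N} a sequence of finite nonnegative measures on D. If there exists a summable sequence (t_i)_{i∈N} of nonnegative reals such that μ_{i+1} ≤ e^{t_i} μ_i pointwise for all i, then the sequence (μ_i) converges in total-variation norm to a finite nonnegative measure μ on D. -/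
open Filter Finset Real Topology

/-!
Dividing by `exp (∑_{j<i} t j)` turns the hypothesis into monotonicity: `μ i x * exp (-∑_{j<i} t j)`
decreases in `i`, so it converges for each `x`, and so does `μ i x`, since the partial sums of `t`
converge. As `t ≥ 0`, every `μ i` is at most `exp (∑' j, t j) * μ 0`, and dominated convergence for
series upgrades the pointwise limit to an `ℓ¹` limit.
-/

theorem tendsto_tsum_norm_sub_of_dominated {α β G : Type*} {l : Filter α}
    [NormedAddCommGroup G] [CompleteSpace G] {f : α → β → G} {g : β → G} {bound : β → ℝ}
    (hbound : Summable bound) (hlim : ∀ x, Tendsto (f · x) l (𝓝 (g x)))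
    (hle : ∀ i x, ‖f i x‖ ≤ bound x) :
    Tendsto (fun i => ∑' x, ‖f i x - g x‖) l (𝓝 0) := by
  rcases l.eq_or_neBot with rfl | _
  · exact tendsto_bot
  have hg : ∀ x, ‖g x‖ ≤ bound x := fun x =>
    le_of_tendsto (hlim x).norm (Eventually.of_forall fun i => hle i x)
  have hsub : ∀ x, Tendsto (fun i => ‖f i x - g x‖) l (𝓝 0) := fun x => by
    simpa using ((hlim x).sub_const (g x)).norm
  simpa using tendsto_tsum_of_dominated_convergence (hbound.mul_left 2) hsub
    (Eventually.of_forall fun i x => by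
      rw [norm_norm, two_mul]
      exact (norm_sub_le _ _).trans (add_le_add (hle i x) (hg x)))

section ExpPerturbedAntitone

variable {a t : ℕ → ℝ}

theorem antitone_mul_exp_neg_sum_range (hle : ∀ i, a (i + 1) ≤ exp (t i) * a i) :
    Antitone fun i => a i * exp (-∑ j ∈ range i, t j) := by
  refine antitone_nat_of_succ_le fun i => ?_
  calc a (i + 1) * exp (-∑ j ∈ range (i + 1), t j)
      ≤ exp (t i) * a i * exp (-∑ j ∈ range (i + 1), t j) := by gcongr; exact hle i
    _ = a i * exp (-∑ j ∈ range i, t j) := by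
      rw [sum_range_succ, neg_add, exp_add, exp_neg (t i)]
      field_simp

theorem le_exp_sum_range_mul (hle : ∀ i, a (i + 1) ≤ exp (t i) * a i) (i : ℕ) :
    a i ≤ exp (∑ j ∈ range i, t j) * a 0 := by
  have h := antitone_mul_exp_neg_sum_range hle (Nat.zero_le i)
  simp only [range_zero, sum_empty, neg_zero, exp_zero, mul_one] at h
  rwa [exp_neg, ← div_eq_mul_inv, div_le_iff₀ (exp_pos _), mul_comm] at h

theorem exists_tendsto_of_le_exp_mul (ha : ∀ i, 0 ≤ a i) (ht : Summable t)
    (hle : ∀ i, a (i + 1) ≤ exp (t i) * a i) : ∃ l, Tendsto a atTop (𝓝 l) := by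
  set b := fun i => a i * exp (-∑ j ∈ range i, t j)
  have hb : Tendsto b atTop (𝓝 (⨅ i, b i)) :=
    tendsto_atTop_ciInf (antitone_mul_exp_neg_sum_range hle)
      ⟨0, Set.forall_mem_range.2 fun i => mul_nonneg (ha i) (exp_pos _).le⟩
  have hexp : Tendsto (fun i => exp (∑ j ∈ range i, t j)) atTop (𝓝 (exp (∑' j, t j))) :=
    (continuous_exp.tendsto _).comp ht.hasSum.tendsto_sum_nat
  refine ⟨_, (hb.mul hexp).congr fun i => ?_⟩
  simp only [b, mul_assoc, ← exp_add, neg_add_cancel, exp_zero, mul_one]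

end ExpPerturbedAntitone

theorem convergence_of_measures_on_countable_general {D : Type*}
    (μ : ℕ → D → ℝ)
    (hnn : ∀ i x, 0 ≤ μ i x) (hsummable : ∀ i, Summable (μ i))
    (t : ℕ → ℝ) (ht0 : ∀ i, 0 ≤ t i) (htsum : Summable t)
    (hle : ∀ i x, μ (i + 1) x ≤ Real.exp (t i) * μ i x) :
    ∃ ν : D → ℝ, (∀ x, 0 ≤ ν x) ∧ Summable ν ∧
      Filter.Tendsto (fun i => ∑' x, |μ i x - ν x|) Filter.atTop (nhds 0) := by
  choose ν hν using fun x =>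
    exists_tendsto_of_le_exp_mul (hnn · x) htsum (hle · x)
  set C := exp (∑' j, t j)
  have hbound : ∀ i x, μ i x ≤ C * μ 0 x := fun i x => by
    refine (le_exp_sum_range_mul (a := (μ · x)) (hle · x) i).trans ?_
    gcongr
    · exact hnn 0 x
    · exact exp_le_exp.2 (htsum.sum_le_tsum _ fun j _ => ht0 j)
  have hνnn : ∀ x, 0 ≤ ν x := fun x =>
    ge_of_tendsto' (hν x) fun i => hnn i x
  have hνle : ∀ x, ν x ≤ C * μ 0 x := fun x =>
    le_of_tendsto' (hν x) fun i => hbound i x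
  refine ⟨ν, hνnn, ((hsummable 0).mul_left C).of_nonneg_of_le hνnn hνle, ?_⟩
  simpa only [Real.norm_eq_abs] using
    tendsto_tsum_norm_sub_of_dominated ((hsummable 0).mul_left C) hν fun i x => by
      rw [Real.norm_eq_abs, abs_of_nonneg (hnn i x)]
      exact hbound i x

/-- Let `D` be a countable set and `(μ_i)` a sequence of finite nonnegative
measures on `D` (identified with nonnegative summable families). If there exists a summable
sequence `(t_i)` of nonnegative reals such that `μ_{i+1} ≤ e^{t_i} μ_i` pointwise for all `i`,
then `(μ_i)` converges in total-variation (`ℓ¹`) norm to a finite nonnegative measure `μ`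
on `D`. -/
theorem convergence_of_measures_on_countable {D : Type*} [Countable D]
    (μ : ℕ → D → ℝ)
    (hnn : ∀ i x, 0 ≤ μ i x) (hsummable : ∀ i, Summable (μ i))
    (t : ℕ → ℝ) (ht0 : ∀ i, 0 ≤ t i) (htsum : Summable t)
    (hle : ∀ i x, μ (i + 1) x ≤ Real.exp (t i) * μ i x) :
    ∃ ν : D → ℝ, (∀ x, 0 ≤ ν x) ∧ Summable ν ∧
      Filter.Tendsto (fun i => ∑' x, |μ i x - ν x|) Filter.atTop (nhds 0) :=
  convergence_of_measures_on_countable_general μ hnn hsummable t ht0 htsum hle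
end
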